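/- arXiv:2512.15504 — 4 statements merged into one kernel-verified Lean document; each statement's English description precedes it below -/
import Mathlib

section
/- Let τ ∈ ℝ, let 0 < m < a and 0 < m < b, let 0 < δ < (2/9)·m, and let T satisfy Tδ = π/2. If |a − b − τ| < δ, then |(1/T)·∫₀ᵀ cos(tτ)·(sin(ta)/a)·(sin(tb)/b) dt| > 1/(8π·a·b). -/
open Real intervalIntegral

lemma cos_integral (T c : ℝ) (hc : c ≠ 0) :
    ∫ t in (0:ℝ)..T, Real.cos (t * c) = Real.sin (T * c) / c := by
  have h : ∀ t ∈ Set.uIcc (0:ℝ) T,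
      HasDerivAt (fun t => Real.sin (t * c) / c) (Real.cos (t * c)) t := by
    intro t _
    have h1 : HasDerivAt (fun t : ℝ => t * c) c t := hasDerivAt_mul_const c
    have h2 := ((Real.hasDerivAt_sin (t * c)).comp t h1).div_const c
    simpa [mul_div_cancel_right₀ _ hc] using h2
  rw [intervalIntegral.integral_eq_sub_of_hasDerivAt h
    ((Real.continuous_cos.comp (continuous_id.mul continuous_const)).intervalIntegrable _ _)]
  simp

lemma sinc_even (T c : ℝ) (hc : c ≠ 0) :
    Real.sin (T * c) / c = Real.sin (T * |c|) / |c| := by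
  rcases hc.lt_or_gt with h | h
  · rw [abs_of_neg h]
    rw [show T * -c = -(T * c) by ring, Real.sin_neg]
    field_simp
  · rw [abs_of_pos h]

lemma lemA (T c : ℝ) (hT : 0 < T) (h : T * |c| < Real.pi / 2) :
    2 * T ≤ Real.pi * ∫ t in (0:ℝ)..T, Real.cos (t * c) := by
  rcases eq_or_ne c 0 with rfl | hc
  · simp only [mul_zero, Real.cos_zero]
    rw [integral_one]
    nlinarith [Real.pi_gt_three]
  · rw [cos_integral T c hc, sinc_even T c hc]
    have hcpos : 0 < |c| := abs_pos.2 hc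
    have hu : 0 ≤ T * |c| := by positivity
    have h1 := Real.mul_le_sin hu h.le
    have h1' := mul_le_mul_of_nonneg_left h1 Real.pi_pos.le
    have h1'' : Real.pi * (2 / Real.pi * (T * |c|)) = 2 * (T * |c|) := by
      field_simp
    rw [h1''] at h1'
    rw [mul_div_assoc', le_div_iff₀ hcpos]
    linarith

lemma lemB (T c : ℝ) (hT : 0 < T) :
    -T ≤ Real.pi * ∫ t in (0:ℝ)..T, Real.cos (t * c) := by
  rcases eq_or_ne c 0 with rfl | hc
  · simp only [mul_zero, Real.cos_zero]
    rw [integral_one]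
    nlinarith [Real.pi_pos]
  · rw [cos_integral T c hc, sinc_even T c hc]
    have hcpos : 0 < |c| := abs_pos.2 hc
    rcases le_or_gt (T * |c|) Real.pi with h | h
    · have hs : 0 ≤ Real.sin (T * |c|) :=
        Real.sin_nonneg_of_nonneg_of_le_pi (by positivity) h
      have := mul_nonneg Real.pi_pos.le (div_nonneg hs (abs_nonneg c))
      linarith
    · rw [mul_div_assoc', le_div_iff₀ hcpos]
      nlinarith [Real.neg_one_le_sin (T * |c|),
        mul_le_mul_of_nonneg_left (Real.neg_one_le_sin (T * |c|)) Real.pi_pos.le]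

lemma lemC (T c : ℝ) (hT : 0 < T) (hc : 0 < c) (h4 : 4 * Real.pi < T * c) :
    4 * Real.pi * |∫ t in (0:ℝ)..T, Real.cos (t * c)| < T := by
  rw [cos_integral T c hc.ne']
  rw [abs_div, abs_of_pos hc]
  have hs : |Real.sin (T * c)| ≤ 1 := Real.abs_sin_le_one _
  rw [mul_div_assoc', div_lt_iff₀ hc]
  nlinarith [Real.pi_pos]

theorem stmt_4 (τ m a b δ T : ℝ) (hm : 0 < m) (ha : m < a) (hb : m < b)
    (hδ : 0 < δ) (hδm : δ < (2/9) * m) (hTδ : T * δ = Real.pi / 2)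
    (hab : |a - b - τ| < δ) :
    |(1 / T) * ∫ t in (0:ℝ)..T,
        Real.cos (t * τ) * (Real.sin (t * a) / a) * (Real.sin (t * b) / b)|
      > 1 / (8 * Real.pi * a * b) := by
  have hπ := Real.pi_pos
  have ha' : 0 < a := hm.trans ha
  have hb' : 0 < b := hm.trans hb
  have hT : 0 < T := by nlinarith
  obtain ⟨hτ1, hτ2⟩ := abs_lt.1 hab
  have hc2 : 8 * δ < a + b - τ := by linarith
  have hc3 : 8 * δ < a + b + τ := by linarith
  have hint : ∀ c : ℝ, IntervalIntegrable (fun t => Real.cos (t * c))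
      MeasureTheory.volume 0 T := fun c =>
    (Real.continuous_cos.comp (continuous_id.mul continuous_const)).intervalIntegrable _ _
  have hIeq : (∫ t in (0:ℝ)..T,
        Real.cos (t * τ) * (Real.sin (t * a) / a) * (Real.sin (t * b) / b))
      = (1 / (4 * a * b)) *
        ((∫ t in (0:ℝ)..T, Real.cos (t * (a - b - τ)))
          + (∫ t in (0:ℝ)..T, Real.cos (t * (a - b + τ)))
          - (∫ t in (0:ℝ)..T, Real.cos (t * (a + b - τ)))
          - (∫ t in (0:ℝ)..T, Real.cos (t * (a + b + τ)))) := by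
    rw [← intervalIntegral.integral_add (hint _) (hint _),
      ← intervalIntegral.integral_sub ((hint (a - b - τ)).add (hint _)) (hint _),
      ← intervalIntegral.integral_sub (((hint (a - b - τ)).add (hint _)).sub (hint _)) (hint _),
      ← intervalIntegral.integral_const_mul]
    apply intervalIntegral.integral_congr
    intro t _
    simp only [mul_sub, mul_add, Real.cos_sub, Real.cos_add, Real.sin_sub, Real.sin_add]
    field_simp
    ring
  set I0 := ∫ t in (0:ℝ)..T, Real.cos (t * (a - b - τ)) with hI0
  set I1 := ∫ t in (0:ℝ)..T, Real.cos (t * (a - b + τ)) with hI1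
  set I2 := ∫ t in (0:ℝ)..T, Real.cos (t * (a + b - τ)) with hI2
  set I3 := ∫ t in (0:ℝ)..T, Real.cos (t * (a + b + τ)) with hI3
  have h0 : 2 * T ≤ Real.pi * I0 := by
    apply lemA T _ hT
    calc T * |a - b - τ| < T * δ := by exact mul_lt_mul_of_pos_left hab hT
    _ = Real.pi / 2 := hTδ
  have h1 : -T ≤ Real.pi * I1 := lemB T _ hT
  have h2 : 4 * Real.pi * |I2| < T := by
    apply lemC T _ hT (by linarith) (by nlinarith)
  have h3 : 4 * Real.pi * |I3| < T := by
    apply lemC T _ hT (by linarith) (by nlinarith)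
  have h2' : |4 * Real.pi * I2| < T := by
    rwa [abs_mul, abs_of_nonneg (by positivity : (0:ℝ) ≤ 4 * Real.pi)]
  have h3' : |4 * Real.pi * I3| < T := by
    rwa [abs_mul, abs_of_nonneg (by positivity : (0:ℝ) ≤ 4 * Real.pi)]
  obtain ⟨h2l, h2r⟩ := abs_lt.1 h2'
  obtain ⟨h3l, h3r⟩ := abs_lt.1 h3'
  have hS : T < 2 * Real.pi * (I0 + I1 - I2 - I3) := by linarith
  rw [hIeq]
  have hlt : 1 / (8 * Real.pi * a * b)
      < 1 / T * (1 / (4 * a * b) * (I0 + I1 - I2 - I3)) := by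
    have heq : 1 / T * (1 / (4 * a * b) * (I0 + I1 - I2 - I3))
        = (I0 + I1 - I2 - I3) / (4 * a * b * T) := by
      field_simp
    rw [heq, div_lt_div_iff₀ (by positivity) (by positivity)]
    nlinarith [mul_lt_mul_of_pos_left hS (show (0:ℝ) < 4 * a * b by positivity)]
  exact lt_of_lt_of_le hlt (le_abs_self _)
end

section
/- For every positive real x, Γ(x+1)/Γ(x+1/2) ≤ (x+1)^{1/2}, where Γ is the Gamma function. -/
theorem stmt_8 (x : ℝ) (hx : 0 < x) :
    Real.Gamma (x + 1) / Real.Gamma (x + 1 / 2) ≤ Real.sqrt (x + 1) := by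
  have hs : (0:ℝ) < x + 1/2 := by linarith
  have ht : (0:ℝ) < x + 3/2 := by linarith
  have hG : 0 < Real.Gamma (x + 1/2) := Real.Gamma_pos_of_pos hs
  have key := Real.Gamma_mul_add_mul_le_rpow_Gamma_mul_rpow_Gamma hs ht
      (by norm_num : (0:ℝ) < 1/2) (by norm_num : (0:ℝ) < 1/2) (by norm_num)
  have h1 : (1/2 : ℝ) * (x + 1/2) + 1/2 * (x + 3/2) = x + 1 := by ring
  rw [h1] at key
  have h2 : Real.Gamma (x + 3/2) = (x + 1/2) * Real.Gamma (x + 1/2) := by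
    have := Real.Gamma_add_one hs.ne'
    rw [show x + 3/2 = x + 1/2 + 1 by ring, this]
  rw [h2, Real.mul_rpow hs.le hG.le] at key
  have h3 : Real.Gamma (x + 1/2) ^ (1/2:ℝ) * ((x + 1/2) ^ (1/2:ℝ) *
      Real.Gamma (x + 1/2) ^ (1/2:ℝ)) = (x + 1/2) ^ (1/2:ℝ) * Real.Gamma (x + 1/2) := by
    rw [← mul_assoc, mul_comm (Real.Gamma (x + 1/2) ^ (1/2:ℝ)) ((x + 1/2) ^ (1/2:ℝ)),
      mul_assoc, ← Real.rpow_add hG]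
    norm_num
  rw [h3] at key
  rw [div_le_iff₀ hG]
  calc Real.Gamma (x + 1) ≤ (x + 1/2) ^ (1/2:ℝ) * Real.Gamma (x + 1/2) := key
    _ ≤ Real.sqrt (x + 1) * Real.Gamma (x + 1/2) := by
        apply mul_le_mul_of_nonneg_right _ hG.le
        rw [Real.sqrt_eq_rpow]
        exact Real.rpow_le_rpow hs.le (by linarith) (by norm_num)
end

section
/- Let t > t' > 0 and ρ > 0 with ρ < t' + ρ and t < t' + ρ (so the geometric configuration has t − t' < ρ). For the angle Θ ∈ (π/2, π) defined by cosh(t) = cosh(ρ)cosh(t') − sinh(ρ)sinh(t')cos(Θ), one has sin(Θ) ≥ √(1 − 1/cosh(t' + ρ − t)). -/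
theorem stmt_11 (t t' ρ Θ : ℝ) (ht' : 0 < t') (htt' : t' < t) (hρ : 0 < ρ)
    (h1 : t - t' < ρ) (h2 : ρ < t) (h3 : t < t' + ρ)
    (hΘ : Θ ∈ Set.Ioo (Real.pi / 2) Real.pi)
    (hlaw : Real.cosh t
      = Real.cosh ρ * Real.cosh t' - Real.sinh ρ * Real.sinh t' * Real.cos Θ) :
    Real.sin Θ ≥ Real.sqrt (1 - 1 / Real.cosh (t' + ρ - t)) := by
  obtain ⟨hΘ1, hΘ2⟩ := hΘ
  have hpi := Real.pi_pos
  have hsin : 0 ≤ Real.sin Θ :=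
    Real.sin_nonneg_of_nonneg_of_le_pi (by linarith) (le_of_lt hΘ2)
  have hD : 0 < Real.sinh ρ * Real.sinh t' :=
    mul_pos (Real.sinh_pos_iff.2 hρ) (Real.sinh_pos_iff.2 ht')
  have hA : Real.cosh (t' + ρ) = Real.cosh t' * Real.cosh ρ + Real.sinh t' * Real.sinh ρ :=
    Real.cosh_add _ _
  have hkey : (1 + Real.cos Θ) * (Real.sinh ρ * Real.sinh t')
      = Real.cosh (t' + ρ) - Real.cosh t := by
    linear_combination hlaw - hA
  set δ := t' + ρ - t with hδ
  have hcd : 1 ≤ Real.cosh δ := Real.one_le_cosh δ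
  have hct : 1 ≤ Real.cosh t := Real.one_le_cosh t
  have hprod : Real.cosh t * Real.cosh δ ≤ Real.cosh (t' + ρ) := by
    have e1 : Real.cosh (t + δ) = Real.cosh t * Real.cosh δ + Real.sinh t * Real.sinh δ :=
      Real.cosh_add _ _
    have e2 : Real.cosh (t - δ) = Real.cosh t * Real.cosh δ - Real.sinh t * Real.sinh δ :=
      Real.cosh_sub _ _
    have e3 : t + δ = t' + ρ := by rw [hδ]; ring
    rw [e3] at e1
    have e4 : Real.cosh (t - δ) ≤ Real.cosh (t' + ρ) := by
      rw [Real.cosh_le_cosh, abs_of_pos (show (0:ℝ) < t' + ρ by linarith), abs_le]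
      constructor <;> rw [hδ] <;> linarith
    linarith [e1, e2, e4]
  have hDA : Real.sinh ρ * Real.sinh t' ≤ Real.cosh (t' + ρ) := by
    nlinarith [Real.cosh_pos t', Real.cosh_pos ρ]
  have hcδ : 0 < Real.cosh δ := Real.cosh_pos _
  set u := 1 / Real.cosh δ with hu
  have huc : u * Real.cosh δ = 1 := by rw [hu]; field_simp
  have hu1 : u ≤ 1 := by rw [hu, div_le_one hcδ]; exact hcd
  have hu0 : 0 < u := by rw [hu]; positivity
  have hmain : 1 - u ≤ 1 + Real.cos Θ := by
    have h7 : (1 - u) * (Real.sinh ρ * Real.sinh t')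
        ≤ (1 + Real.cos Θ) * (Real.sinh ρ * Real.sinh t') := by
      rw [hkey]
      nlinarith [mul_nonneg (sub_nonneg.2 hu1) (sub_nonneg.2 hDA),
        mul_le_mul_of_nonneg_left hprod hu0.le, huc]
    exact (mul_le_mul_iff_of_pos_right hD).1 h7
  have hsq : 1 - u ≤ Real.sin Θ ^ 2 := by
    have hs := Real.sin_sq_add_cos_sq Θ
    have hc1 : -1 ≤ Real.cos Θ := Real.neg_one_le_cos Θ
    have hcneg : Real.cos Θ ≤ 0 :=
      Real.cos_nonpos_of_pi_div_two_le_of_le (le_of_lt hΘ1) (by linarith)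
    nlinarith [mul_nonneg (sub_nonneg.2 (show Real.cos Θ ≤ 1 by linarith))
      (by linarith : (0:ℝ) ≤ Real.cos Θ + 1)]
  calc Real.sin Θ = Real.sqrt (Real.sin Θ ^ 2) := (Real.sqrt_sq hsin).symm
    _ ≥ Real.sqrt (1 - u) := Real.sqrt_le_sqrt hsq
end

section
/- For real numbers t > t' > 0 and 0 < ρ < t − t', and for all r ∈ [0, t'] and θ ∈ [0, π]: cosh(t) − (cosh(ρ)cosh(r) + sinh(ρ)sinh(r)cos(θ)) ≥ sinh(t')·sinh(ρ)·(t − t' − ρ). -/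
theorem stmt_13 (t t' ρ r θ : ℝ) (ht' : 0 < t') (htt' : t' < t)
    (hρ0 : 0 < ρ) (hρ : ρ < t - t')
    (hr : r ∈ Set.Icc (0:ℝ) t') (hθ : θ ∈ Set.Icc (0:ℝ) Real.pi) :
    Real.cosh t - (Real.cosh ρ * Real.cosh r + Real.sinh ρ * Real.sinh r * Real.cos θ)
      ≥ Real.sinh t' * Real.sinh ρ * (t - t' - ρ) := by
  obtain ⟨hr0, hrt'⟩ := hr
  set s := t' + ρ with hs
  have hsρ : Real.sinh ρ > 0 := Real.sinh_pos_iff.mpr hρ0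
  have hsr : Real.sinh r ≥ 0 := Real.sinh_nonneg_iff.mpr hr0
  have hst' : Real.sinh t' > 0 := Real.sinh_pos_iff.mpr ht'
  have hcosθ : Real.cos θ ≤ 1 := Real.cos_le_one θ
  -- step 1: bound by cosh (ρ + r)
  have h1 : Real.cosh ρ * Real.cosh r + Real.sinh ρ * Real.sinh r * Real.cos θ
      ≤ Real.cosh (ρ + r) := by
    rw [Real.cosh_add]
    nlinarith [mul_nonneg hsρ.le hsr]
  -- step 2: cosh (ρ + r) ≤ cosh s
  have h2 : Real.cosh (ρ + r) ≤ Real.cosh s := by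
    have : |ρ + r| ≤ |s| := by
      rw [abs_of_nonneg (by linarith), abs_of_nonneg (by positivity)]
      linarith
    exact Real.cosh_le_cosh.mpr this
  -- step 3: cosh t - cosh s ≥ sinh s * (t - s)
  have hts : s ≤ t := by simp only [hs]; linarith
  have h3 : Real.cosh t - Real.cosh s ≥ Real.sinh s * (t - s) := by
    have e1 := Real.add_one_le_exp (t - s)
    have e2 := Real.add_one_le_exp (s - t)
    rw [Real.exp_sub] at e1 e2
    have hps : Real.exp s > 0 := Real.exp_pos s
    have hpt : Real.exp t > 0 := Real.exp_pos t
    have hpns : Real.exp (-s) > 0 := Real.exp_pos _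
    have hpnt : Real.exp (-t) > 0 := Real.exp_pos _
    have hns : Real.exp (-s) = (Real.exp s)⁻¹ := Real.exp_neg s
    have hnt : Real.exp (-t) = (Real.exp t)⁻¹ := Real.exp_neg t
    rw [Real.cosh_eq, Real.cosh_eq, Real.sinh_eq]
    rw [hns, hnt]
    rw [le_div_iff₀ hps] at e1
    rw [le_div_iff₀ hpt] at e2
    have h1' : Real.exp s * (t - s) ≤ Real.exp t - Real.exp s := by nlinarith
    have h2' : (Real.exp s)⁻¹ * (s - t) ≤ (Real.exp t)⁻¹ - (Real.exp s)⁻¹ := by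
      have : (s - t + 1) * Real.exp t ≤ Real.exp s := e2
      have hinv : (Real.exp s)⁻¹ * (Real.exp s) = 1 := inv_mul_cancel₀ hps.ne'
      have hinvt : (Real.exp t)⁻¹ * (Real.exp t) = 1 := inv_mul_cancel₀ hpt.ne'
      nlinarith [mul_pos (inv_pos.mpr hps) (inv_pos.mpr hpt)]
    nlinarith [h1', h2']
  -- step 4: sinh s ≥ sinh t' * sinh ρ
  have h4 : Real.sinh s ≥ Real.sinh t' * Real.sinh ρ := by
    rw [hs, Real.sinh_add]
    have hcρ : Real.sinh ρ ≤ Real.cosh ρ := by nlinarith [Real.cosh_sq ρ, Real.cosh_pos (x := ρ)]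
    have hct' : 0 < Real.cosh t' := Real.cosh_pos (x := t')
    nlinarith
  have hts' : 0 < t - s := by simp only [hs]; linarith
  have : Real.sinh t' * Real.sinh ρ * (t - s) ≤ Real.sinh s * (t - s) := by
    nlinarith
  have hfin : t - s = t - t' - ρ := by rw [hs]; ring
  rw [← hfin]
  linarith
end
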